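/- Let X ∈ ℝ^{n×p} and let Y = XB + W, where B ∈ ℝ^{p×L} satisfies B[i,:] = 0 for all i ∉ S for an index set S ⊆ {1,…,p} with card(S) = k, and W ∈ ℝ^{n×L}. Let 0 ≤ δ < 1 be such that (1−δ)‖b‖₂² ≤ ‖Xb‖₂² for every vector b ∈ ℝ^p with at most k+1 nonzero entries, let B_min = min_{i∈S} ‖B[i,:]‖₂, and let S' ⊊ S be a proper subset. If for some Γ > 0 the noise satisfies ‖W‖_F < (Γ/(1+Γ))·√(1−δ)·B_min, then ‖(Iₙ − P(S))Y‖_F / ‖(Iₙ − P(S'))Y‖_F < Γ. -/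

import Mathlib

open Matrix

/-- The squared Frobenius norm of a real matrix. -/
noncomputable def frobSq {n L : ℕ} (A : Matrix (Fin n) (Fin L) ℝ) : ℝ :=
  ∑ i, ∑ j, A i j ^ 2

/-- The Frobenius norm of a real matrix. -/
noncomputable def frob {n L : ℕ} (A : Matrix (Fin n) (Fin L) ℝ) : ℝ :=
  Real.sqrt (frobSq A)

/-- The span of the columns of `X` indexed by the index set `S`. -/
def colSpan {n p : ℕ} (X : Matrix (Fin n) (Fin p) ℝ) (S : Finset (Fin p)) :
    Submodule ℝ (Fin n → ℝ) :=
  Submodule.span ℝ ((fun j => fun i => X i j) '' (S : Set (Fin p)))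

/-- `P` is the orthogonal projection matrix onto the subspace `V` of `ℝⁿ`. -/
def IsOrthProjOnto {n : ℕ} (P : Matrix (Fin n) (Fin n) ℝ)
    (V : Submodule ℝ (Fin n → ℝ)) : Prop :=
  P * P = P ∧ Pᵀ = P ∧ LinearMap.range P.mulVecLin = V

/-- The minimum Euclidean row norm `min_{i ∈ S} ‖B[i,:]‖₂` of the rows of `B` indexed
by `S`. -/
noncomputable def minRowNorm {p L : ℕ} (B : Matrix (Fin p) (Fin L) ℝ)
    (S : Finset (Fin p)) : ℝ :=
  sInf ((fun i => Real.sqrt (∑ j, B i j ^ 2)) '' (S : Set (Fin p)))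


/-!
The projection `1 - P(S)` annihilates `XB`, so the numerator is at most `‖W‖_F`. For the
denominator pick `i₀ ∈ S \ S'`: the `j`-th column of `(1 - P(S'))XB` is `X(b_j - c_j)` with
`c_j` supported on `S'`, so `b_j - c_j` is `|S|`-sparse with `i₀`-entry `B[i₀,j]`, and the RIP gives
`‖(1 - P(S'))XB‖_F ≥ √(1-δ) ‖B[i₀,:]‖₂ ≥ √(1-δ) B_min`. By the triangle inequality the
denominator is at least `√(1-δ) B_min - ‖W‖_F`, and the noise bound is exactly
`‖W‖_F < Γ (√(1-δ) B_min - ‖W‖_F)`.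
-/

def LowerRIP {n p : ℕ} (X : Matrix (Fin n) (Fin p) ℝ) (s : ℕ) (δ : ℝ) : Prop :=
  ∀ b : Fin p → ℝ, (∃ T : Finset (Fin p), T.card ≤ s ∧ ∀ i ∉ T, b i = 0) →
    (1 - δ) * ∑ i, b i ^ 2 ≤ ∑ i, (X *ᵥ b) i ^ 2

lemma col_mul {l m n α : Type*} [Fintype m] [NonUnitalNonAssocSemiring α] (M : Matrix l m α)
    (A : Matrix m n α) (j : n) : (M * A).col j = M *ᵥ A.col j := by
  ext i
  simp [Matrix.mul_apply, Matrix.mulVec, dotProduct]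

lemma frobSq_eq_sum_col {n L : ℕ} (A : Matrix (Fin n) (Fin L) ℝ) :
    frobSq A = ∑ j, ∑ i, A.col j i ^ 2 :=
  Finset.sum_comm

section FrobeniusNorm

attribute [local instance] Matrix.frobeniusNormedAddCommGroup

lemma frob_eq_norm {n L : ℕ} (A : Matrix (Fin n) (Fin L) ℝ) : frob A = ‖A‖ := by
  simp [frob, frobSq, frobenius_norm_def, Real.sqrt_eq_rpow]

lemma frob_sub_le_frob_add {n L : ℕ} (A C : Matrix (Fin n) (Fin L) ℝ) :
    frob A - frob C ≤ frob (A + C) := by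
  simpa only [frob_eq_norm] using norm_sub_le_norm_add A C

end FrobeniusNorm

lemma minRowNorm_le {p L : ℕ} (B : Matrix (Fin p) (Fin L) ℝ) {S : Finset (Fin p)} {i : Fin p}
    (hi : i ∈ S) : minRowNorm B S ≤ √(∑ j, B i j ^ 2) :=
  csInf_le (S.finite_toSet.image _).bddBelow ⟨i, hi, rfl⟩

lemma mem_colSpan_iff {n p : ℕ} {X : Matrix (Fin n) (Fin p) ℝ} {S : Finset (Fin p)}
    {u : Fin n → ℝ} : u ∈ colSpan X S ↔ ∃ c : Fin p → ℝ, (∀ i ∉ S, c i = 0) ∧ X *ᵥ c = u := by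
  have hspan : colSpan X S =
      (Submodule.span ℝ (Pi.basisFun ℝ (Fin p) '' S)).map X.mulVecLin := by
    rw [colSpan, Submodule.map_span, ← Set.image_comp]
    congr 2
    funext j
    show _ = X.mulVecLin (Pi.basisFun ℝ (Fin p) j)
    rw [Pi.basisFun_apply, mulVecLin_apply, mulVec_single_one]
    rfl
  rw [hspan, Submodule.mem_map]
  refine exists_congr fun c => and_congr ?_ (by rw [mulVecLin_apply])
  rw [Module.Basis.mem_span_image]
  simp [Set.subset_def, not_imp_comm]

namespace IsOrthProjOnto

variable {n : ℕ} {P : Matrix (Fin n) (Fin n) ℝ} {V : Submodule ℝ (Fin n → ℝ)}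

lemma mulVec_mem (hP : IsOrthProjOnto P V) (v : Fin n → ℝ) : P *ᵥ v ∈ V :=
  hP.2.2 ▸ ⟨v, rfl⟩

lemma one_sub_mulVec_eq_zero (hP : IsOrthProjOnto P V) {v : Fin n → ℝ} (hv : v ∈ V) :
    (1 - P) *ᵥ v = 0 := by
  rw [← hP.2.2] at hv
  obtain ⟨w, rfl⟩ := hv
  rw [mulVecLin_apply, mulVec_mulVec, Matrix.sub_mul, Matrix.one_mul, hP.1, sub_self, zero_mulVec]

lemma sum_sq_one_sub_mulVec_le (hP : IsOrthProjOnto P V) (v : Fin n → ℝ) :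
    ∑ i, ((1 - P) *ᵥ v) i ^ 2 ≤ ∑ i, v i ^ 2 := by
  set u := P *ᵥ v
  set r := (1 - P) *ᵥ v
  have hv : v = u + r := by simp [u, r, sub_mulVec]
  have horth : u ⬝ᵥ r = 0 := by
    rw [show u = v ᵥ* P by rw [← hP.2.1, vecMul_transpose], ← dotProduct_mulVec, mulVec_mulVec,
      Matrix.mul_sub, Matrix.mul_one, hP.1, sub_self, zero_mulVec, dotProduct_zero]
  have hpyth : ∑ i, v i ^ 2 = ∑ i, u i ^ 2 + ∑ i, r i ^ 2 + 2 * (u ⬝ᵥ r) := by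
    rw [hv, dotProduct, Finset.mul_sum, ← Finset.sum_add_distrib, ← Finset.sum_add_distrib]
    exact Finset.sum_congr rfl fun i _ => by simp only [Pi.add_apply]; ring
  rw [hpyth, horth]
  linarith [Finset.sum_nonneg fun i (_ : i ∈ Finset.univ) => sq_nonneg (u i)]

lemma frob_one_sub_mul_le {L : ℕ} (hP : IsOrthProjOnto P V) (A : Matrix (Fin n) (Fin L) ℝ) :
    frob ((1 - P) * A) ≤ frob A := by
  refine Real.sqrt_le_sqrt ?_
  rw [frobSq_eq_sum_col, frobSq_eq_sum_col]
  refine Finset.sum_le_sum fun j _ => ?_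
  rw [col_mul]
  exact hP.sum_sq_one_sub_mulVec_le _

lemma one_sub_mul_mul_eq_zero {p L : ℕ} {X : Matrix (Fin n) (Fin p) ℝ} {S : Finset (Fin p)}
    (hP : IsOrthProjOnto P (colSpan X S)) {B : Matrix (Fin p) (Fin L) ℝ}
    (hB : ∀ i ∉ S, ∀ j, B i j = 0) : (1 - P) * (X * B) = 0 := by
  ext i j
  have hcol := hP.one_sub_mulVec_eq_zero (mem_colSpan_iff.2 ⟨B.col j, fun i hi => hB i hi j, rfl⟩)
  rw [← col_mul, ← col_mul] at hcol
  exact congrFun hcol i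

end IsOrthProjOnto

namespace LowerRIP

variable {n p s : ℕ} {X : Matrix (Fin n) (Fin p) ℝ} {δ : ℝ} {S T : Finset (Fin p)}
  {P : Matrix (Fin n) (Fin n) ℝ}

lemma sq_le_sum_sq_one_sub_mulVec (hX : LowerRIP X s δ) (hδ : δ ≤ 1) (hS : S.card ≤ s)
    (hTS : T ⊆ S) (hP : IsOrthProjOnto P (colSpan X T)) {b : Fin p → ℝ}
    (hb : ∀ i ∉ S, b i = 0) {i₀ : Fin p} (hi₀ : i₀ ∉ T) :
    (1 - δ) * b i₀ ^ 2 ≤ ∑ r, ((1 - P) *ᵥ (X *ᵥ b)) r ^ 2 := by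
  obtain ⟨c, hcT, hc⟩ := mem_colSpan_iff.1 (hP.mulVec_mem (X *ᵥ b))
  have hres : (1 - P) *ᵥ (X *ᵥ b) = X *ᵥ (b - c) := by
    rw [sub_mulVec, one_mulVec, ← hc, mulVec_sub]
  have hsparse : ∀ i ∉ S, (b - c) i = 0 := fun i hi => by
    simp [hb i hi, hcT i fun h => hi (hTS h)]
  calc (1 - δ) * b i₀ ^ 2 = (1 - δ) * (b - c) i₀ ^ 2 := by simp [hcT i₀ hi₀]
    _ ≤ (1 - δ) * ∑ i, (b - c) i ^ 2 :=
      mul_le_mul_of_nonneg_left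
        (Finset.single_le_sum (fun i _ => sq_nonneg ((b - c) i)) (Finset.mem_univ i₀))
        (by linarith)
    _ ≤ _ := hres ▸ hX _ ⟨S, hS, hsparse⟩

lemma sqrt_mul_minRowNorm_le_frob {L : ℕ} (hX : LowerRIP X s δ) (hδ : δ ≤ 1)
    (hS : S.card ≤ s) (hTS : T ⊂ S) (hP : IsOrthProjOnto P (colSpan X T))
    {B : Matrix (Fin p) (Fin L) ℝ} (hB : ∀ i ∉ S, ∀ j, B i j = 0) :
    √(1 - δ) * minRowNorm B S ≤ frob ((1 - P) * (X * B)) := by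
  obtain ⟨i₀, hi₀S, hi₀T⟩ := Finset.exists_of_ssubset hTS
  have hcol : ∀ j, (1 - δ) * B i₀ j ^ 2 ≤ ∑ r, ((1 - P) * (X * B)).col j r ^ 2 := fun j => by
    rw [col_mul, col_mul]
    exact hX.sq_le_sum_sq_one_sub_mulVec hδ hS hTS.subset hP (fun i hi => hB i hi j) hi₀T
  calc √(1 - δ) * minRowNorm B S ≤ √(1 - δ) * √(∑ j, B i₀ j ^ 2) :=
        mul_le_mul_of_nonneg_left (minRowNorm_le B hi₀S) (Real.sqrt_nonneg _)
    _ = √((1 - δ) * ∑ j, B i₀ j ^ 2) := (Real.sqrt_mul' _ (by positivity)).symm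
    _ ≤ frob ((1 - P) * (X * B)) := by
      rw [frob, frobSq_eq_sum_col, Finset.mul_sum]
      exact Real.sqrt_le_sqrt (Finset.sum_le_sum fun j _ => hcol j)

end LowerRIP

lemma div_lt_of_le_of_sub_le {a d w ε Γ : ℝ} (hΓ : 0 < Γ) (hw₀ : 0 ≤ w)
    (hw : w < Γ / (1 + Γ) * ε) (ha : a ≤ w) (hd : ε - w ≤ d) : a / d < Γ := by
  have hw' : w < Γ * (ε - w) := by
    rw [div_mul_eq_mul_div, lt_div_iff₀ (by linarith)] at hw
    linarith
  have hd₀ : 0 < d := by nlinarith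
  rw [div_lt_iff₀ hd₀]
  nlinarith

theorem residual_ratio_below_threshold_RIC_general
    {n p L k : ℕ} (X : Matrix (Fin n) (Fin p) ℝ)
    (S : Finset (Fin p)) (hS : S.card = k)
    (B : Matrix (Fin p) (Fin L) ℝ) (hBsupp : ∀ i ∉ S, ∀ j, B i j = 0)
    (W Y : Matrix (Fin n) (Fin L) ℝ) (hY : Y = X * B + W)
    (δ : ℝ) (hδ1 : δ < 1)
    (hRIC : ∀ b : Fin p → ℝ,
      (∃ T : Finset (Fin p), T.card ≤ k + 1 ∧ ∀ i ∉ T, b i = 0) →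
      (1 - δ) * ∑ i, b i ^ 2 ≤ ∑ i, (X.mulVec b i) ^ 2)
    (S' : Finset (Fin p)) (hsub : S' ⊂ S)
    (Γ : ℝ) (hΓ : 0 < Γ)
    (hW : frob W < (Γ / (1 + Γ)) * (Real.sqrt (1 - δ) * minRowNorm B S))
    (PS PS' : Matrix (Fin n) (Fin n) ℝ)
    (hPS : IsOrthProjOnto PS (colSpan X S)) (hPS' : IsOrthProjOnto PS' (colSpan X S')) :
    frob ((1 - PS) * Y) / frob ((1 - PS') * Y) < Γ := by
  have hRIP : LowerRIP X (k + 1) δ := hRIC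
  have hnum : frob ((1 - PS) * Y) ≤ frob W := by
    rw [hY, Matrix.mul_add, hPS.one_sub_mul_mul_eq_zero hBsupp, zero_add]
    exact hPS.frob_one_sub_mul_le W
  have hden : √(1 - δ) * minRowNorm B S - frob W ≤ frob ((1 - PS') * Y) := by
    rw [hY, Matrix.mul_add]
    calc √(1 - δ) * minRowNorm B S - frob W
        ≤ frob ((1 - PS') * (X * B)) - frob ((1 - PS') * W) :=
          sub_le_sub (hRIP.sqrt_mul_minRowNorm_le_frob hδ1.le (by omega) hsub hPS' hBsupp)
            (hPS'.frob_one_sub_mul_le W)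
      _ ≤ _ := frob_sub_le_frob_add _ _
  exact div_lt_of_le_of_sub_le hΓ (Real.sqrt_nonneg _) hW hnum hden

/-- if `Y = XB + W` with `B` row-supported on `S`, `card S = k`,
`(1−δ)‖b‖₂² ≤ ‖Xb‖₂²` for all `(k+1)`-sparse `b`, `S' ⊊ S`, and for some `Γ > 0` the noise
satisfies `‖W‖_F < (Γ/(1+Γ))·√(1−δ)·B_min`, then
`‖(Iₙ−P(S))Y‖_F / ‖(Iₙ−P(S'))Y‖_F < Γ`. -/
theorem residual_ratio_below_threshold_RIC
    {n p L k : ℕ} (X : Matrix (Fin n) (Fin p) ℝ)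
    (S : Finset (Fin p)) (hS : S.card = k)
    (B : Matrix (Fin p) (Fin L) ℝ) (hBsupp : ∀ i ∉ S, ∀ j, B i j = 0)
    (W Y : Matrix (Fin n) (Fin L) ℝ) (hY : Y = X * B + W)
    (δ : ℝ) (hδ0 : 0 ≤ δ) (hδ1 : δ < 1)
    (hRIC : ∀ b : Fin p → ℝ,
      (∃ T : Finset (Fin p), T.card ≤ k + 1 ∧ ∀ i ∉ T, b i = 0) →
      (1 - δ) * ∑ i, b i ^ 2 ≤ ∑ i, (X.mulVec b i) ^ 2)
    (S' : Finset (Fin p)) (hsub : S' ⊂ S)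
    (Γ : ℝ) (hΓ : 0 < Γ)
    (hW : frob W < (Γ / (1 + Γ)) * (Real.sqrt (1 - δ) * minRowNorm B S))
    (PS PS' : Matrix (Fin n) (Fin n) ℝ)
    (hPS : IsOrthProjOnto PS (colSpan X S)) (hPS' : IsOrthProjOnto PS' (colSpan X S')) :
    frob ((1 - PS) * Y) / frob ((1 - PS') * Y) < Γ :=
  residual_ratio_below_threshold_RIC_general X S hS B hBsupp W Y hY δ hδ1 hRIC S' hsub Γ hΓ hW PS
    PS' hPS hPS'
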